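/- arXiv:1311.0423 — 6 statements merged into one kernel-verified Lean document; each statement's English description precedes it below -/
import Mathlib

section
/- Let A ∈ ℝ^{m×n} and k ∈ ℕ. The following are equivalent: (i) for every nonnegative k-sparse vector ū ∈ ℝ^n and every nonnegative u ∈ ℝ^n with Au = Aū one has u = ū (i.e., every k-sparse nonnegative vector is the unique nonnegative solution of its own measurement equations); (ii) every nonzero vector v in the nullspace N(A) has at least k+1 strictly negative entries and at least k+1 strictly positive entries. -/
/-! Write a nullspace vector as `v = v⁺ - v⁻`. Both parts are nonnegative with the same image,
and the support of `v⁻` is the set of negative entries of `v`; so if `v` has at most `k`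
negative entries, uniqueness for the `k`-sparse vector `v⁻` forces `v⁺ = v⁻`, i.e. `v = 0`.
Applying this to `-v` bounds the positive entries. Conversely, if `u ≥ 0` and `ū ≥ 0` have the
same image, every negative entry of `u - ū` lies in the support of `ū`. -/

open Finset

section

variable {ι R M : Type*} [Fintype ι] [AddCommGroup R] [LinearOrder R] [IsOrderedAddMonoid R]
  [AddCommGroup M]

def UniqueNonnegSparseRecovery (f : (ι → R) →+ M) (k : ℕ) : Prop :=
  ∀ ubar : ι → R, 0 ≤ ubar → #{i | ubar i ≠ 0} ≤ k → ∀ u, 0 ≤ u → f u = f ubar → u = ubar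

lemma card_support_negPart (v : ι → R) : #{i | v⁻ i ≠ 0} = #{i | v i < 0} := by
  congr 1
  ext i
  simp only [mem_filter, mem_univ, true_and, Pi.negPart_apply, ← negPart_pos_iff]
  exact (negPart_nonneg (v i)).lt_iff_ne'.symm

lemma card_neg_sub_le_card_support {u ubar : ι → R} (hu : 0 ≤ u) :
    #{i | (u - ubar) i < 0} ≤ #{i | ubar i ≠ 0} := by
  refine card_le_card fun i hi ↦ ?_
  simp only [mem_filter, mem_univ, true_and, Pi.sub_apply, sub_neg] at hi ⊢
  intro hi0
  exact (hi0 ▸ hi).not_ge (hu i)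

lemma lt_card_neg_of_uniqueNonnegSparseRecovery {f : (ι → R) →+ M} {k : ℕ}
    (h : UniqueNonnegSparseRecovery f k) {v : ι → R} (hv : f v = 0) (hv0 : v ≠ 0) :
    k < #{i | v i < 0} := by
  by_contra! hk
  have himage : f v⁺ = f v⁻ := by
    rw [← sub_eq_zero, ← map_sub, posPart_sub_negPart, hv]
  have hparts : v⁺ = v⁻ :=
    h v⁻ (negPart_nonneg v) ((card_support_negPart v).trans_le hk) v⁺ (posPart_nonneg v) himage
  exact hv0 (by rw [← posPart_sub_negPart v, hparts, sub_self])

lemma uniqueNonnegSparseRecovery_of_lt_card_neg {f : (ι → R) →+ M} {k : ℕ}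
    (h : ∀ v, f v = 0 → v ≠ 0 → k < #{i | v i < 0}) : UniqueNonnegSparseRecovery f k := by
  intro ubar _ hsparse u hu himage
  by_contra hne
  have hk := h (u - ubar) (by rw [map_sub, himage, sub_self]) (sub_ne_zero.mpr hne)
  exact (hk.trans_le (card_neg_sub_le_card_support hu)).not_ge hsparse

theorem uniqueNonnegSparseRecovery_iff (f : (ι → R) →+ M) (k : ℕ) :
    UniqueNonnegSparseRecovery f k ↔
      ∀ v, f v = 0 → v ≠ 0 → k < #{i | v i < 0} ∧ k < #{i | 0 < v i} := by
  refine ⟨fun h v hv hv0 ↦ ⟨lt_card_neg_of_uniqueNonnegSparseRecovery h hv hv0, ?_⟩,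
    fun h ↦ uniqueNonnegSparseRecovery_of_lt_card_neg fun v hv hv0 ↦ (h v hv hv0).1⟩
  have hneg := lt_card_neg_of_uniqueNonnegSparseRecovery h (v := -v)
    (by rw [map_neg, hv, neg_zero]) (neg_ne_zero.mpr hv0)
  simpa only [Pi.neg_apply, neg_lt_zero] using hneg

end

/-- Every nonnegative `k`-sparse vector is the unique nonnegative solution of its own
measurement equations iff every nonzero nullspace vector of `A` has at least `k+1`
strictly negative and at least `k+1` strictly positive entries. -/
theorem stmt_0 (m n k : ℕ) (A : Matrix (Fin m) (Fin n) ℝ) :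
    (∀ ubar : Fin n → ℝ, (∀ i, 0 ≤ ubar i) →
        (Finset.univ.filter (fun i => ubar i ≠ 0)).card ≤ k →
        ∀ u : Fin n → ℝ, (∀ i, 0 ≤ u i) → A.mulVec u = A.mulVec ubar → u = ubar) ↔
    (∀ v : Fin n → ℝ, A.mulVec v = 0 → v ≠ 0 →
        k + 1 ≤ (Finset.univ.filter (fun i => v i < 0)).card ∧
        k + 1 ≤ (Finset.univ.filter (fun i => 0 < v i)).card) :=
  uniqueNonnegSparseRecovery_iff A.mulVecLin.toAddMonoidHom k
end

section
/- Let A ∈ ℝ^{m×n} and B ∈ ℝ^{p×n} be measurement and analysis operators such that the rows of the stacked matrix (A; B) ∈ ℝ^{(m+p)×n} are linearly independent, and let ℓ ∈ ℕ with ℓ ≤ p. Then the following are equivalent: (i) κ_B(ℓ) ≤ m; (ii) for every Λ ⊆ [p] with |Λ| ≥ ℓ and all u₁, u₂ ∈ W_Λ with Au₁ = Au₂, one has u₁ = u₂ (i.e., every ℓ-cosparse vector with known cosupport Λ is uniquely recoverable from its measurements b = Au). -/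
/-! Linear independence of the rows of `(A; B)` makes `u ↦ (Au, Bu)` surjective, so `A` maps
`N(B) ⊆ W_Λ` onto `ℝ^m`. A surjective linear map `W_Λ → ℝ^m` is injective exactly when
`dim W_Λ ≤ m`. -/

/-- `W_Λ`: the nullspace of the row submatrix `B_Λ` of the analysis operator `B`. -/
noncomputable def Wspace {n p : ℕ} (B : Matrix (Fin p) (Fin n) ℝ) (Λ : Finset (Fin p)) :
    Submodule ℝ (Fin n → ℝ) :=
  ⨅ r ∈ Λ, LinearMap.ker ((LinearMap.proj r : (Fin p → ℝ) →ₗ[ℝ] ℝ) ∘ₗ B.mulVecLin)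

/-- `κ_B(ℓ) = max{dim W_Λ : Λ ⊆ [p], |Λ| ≥ ℓ}`. -/
noncomputable def kappa {n p : ℕ} (B : Matrix (Fin p) (Fin n) ℝ) (ℓ : ℕ) : ℕ :=
  (Finset.univ.filter (fun Λ : Finset (Fin p) => ℓ ≤ Λ.card)).sup
    (fun Λ => Module.finrank ℝ (Wspace B Λ))

theorem Matrix.mulVec_surjective_of_linearIndependent_row {K ι ν : Type*} [Field K] [Fintype ι]
    [Fintype ν] {M : Matrix ι ν K} (h : LinearIndependent K M.row) :
    Function.Surjective M.mulVec := by
  have hrange : LinearMap.range M.mulVecLin = ⊤ := by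
    apply Submodule.eq_top_of_finrank_eq
    rw [Module.finrank_fintype_fun_eq_card, ← h.rank_matrix]
    rfl
  rw [← Matrix.coe_mulVecLin]
  exact LinearMap.range_eq_top.mp hrange

theorem LinearMap.injective_iff_finrank_le_of_surjective {K V W : Type*} [DivisionRing K]
    [AddCommGroup V] [Module K V] [AddCommGroup W] [Module K W] [FiniteDimensional K V]
    [FiniteDimensional K W] {f : V →ₗ[K] W} (hf : Function.Surjective f) :
    Function.Injective f ↔ Module.finrank K V ≤ Module.finrank K W := by
  refine ⟨LinearMap.finrank_le_finrank_of_injective, fun hle => ?_⟩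
  have hge := LinearMap.finrank_range_le f
  rw [LinearMap.range_eq_top.mpr hf, finrank_top] at hge
  exact (LinearMap.injective_iff_surjective_of_finrank_eq_finrank (le_antisymm hle hge)).mpr hf

theorem mem_Wspace {n p : ℕ} {B : Matrix (Fin p) (Fin n) ℝ} {Λ : Finset (Fin p)}
    {u : Fin n → ℝ} : u ∈ Wspace B Λ ↔ ∀ r ∈ Λ, B.mulVec u r = 0 := by
  simp [Wspace]

theorem kappa_le_iff {n p : ℕ} {B : Matrix (Fin p) (Fin n) ℝ} {ℓ k : ℕ} :
    kappa B ℓ ≤ k ↔ ∀ Λ : Finset (Fin p), ℓ ≤ Λ.card → Module.finrank ℝ (Wspace B Λ) ≤ k := by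
  simp [kappa, Finset.sup_le_iff]

theorem surjective_mulVec_domRestrict_Wspace {m n p : ℕ} {A : Matrix (Fin m) (Fin n) ℝ}
    {B : Matrix (Fin p) (Fin n) ℝ} (hli : LinearIndependent ℝ (Matrix.fromRows A B).row)
    (Λ : Finset (Fin p)) : Function.Surjective (A.mulVecLin.domRestrict (Wspace B Λ)) := by
  intro y
  obtain ⟨u, hu⟩ := Matrix.mulVec_surjective_of_linearIndependent_row hli (Sum.elim y 0)
  rw [Matrix.fromRows_mulVec] at hu
  exact ⟨⟨u, mem_Wspace.mpr fun r _ => congrFun hu (Sum.inr r)⟩,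
    funext fun i => congrFun hu (Sum.inl i)⟩

theorem injOn_mulVec_Wspace_iff_finrank_le {m n p : ℕ} {A : Matrix (Fin m) (Fin n) ℝ}
    {B : Matrix (Fin p) (Fin n) ℝ} (hli : LinearIndependent ℝ (Matrix.fromRows A B).row)
    (Λ : Finset (Fin p)) :
    Set.InjOn A.mulVec (Wspace B Λ) ↔ Module.finrank ℝ (Wspace B Λ) ≤ m := by
  rw [Set.injOn_iff_injective]
  exact (LinearMap.injective_iff_finrank_le_of_surjective
    (surjective_mulVec_domRestrict_Wspace hli Λ)).trans (by rw [Module.finrank_fin_fun])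

theorem stmt_3_general (m n p ℓ : ℕ)
    (A : Matrix (Fin m) (Fin n) ℝ) (B : Matrix (Fin p) (Fin n) ℝ)
    (hli : LinearIndependent ℝ (Sum.elim (fun i : Fin m => A i) (fun j : Fin p => B j))) :
    kappa B ℓ ≤ m ↔
      ∀ Λ : Finset (Fin p), ℓ ≤ Λ.card →
        ∀ u₁ u₂ : Fin n → ℝ, u₁ ∈ Wspace B Λ → u₂ ∈ Wspace B Λ →
          A.mulVec u₁ = A.mulVec u₂ → u₁ = u₂ := by
  rw [kappa_le_iff]
  refine forall_congr' fun Λ => imp_congr_right fun _ => ?_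
  rw [← injOn_mulVec_Wspace_iff_finrank_le hli Λ]
  exact ⟨fun h u₁ u₂ h₁ h₂ => h h₁ h₂, fun h u₁ h₁ u₂ h₂ => h u₁ u₂ h₁ h₂⟩

/-- Uniqueness with known cosupport: if the rows of the stacked matrix `(A; B)` are
linearly independent, then `κ_B(ℓ) ≤ m` is necessary and sufficient for recovery of every
`ℓ`-cosparse vector with known cosupport from its measurements. -/
theorem stmt_3 (m n p ℓ : ℕ) (hℓ : ℓ ≤ p)
    (A : Matrix (Fin m) (Fin n) ℝ) (B : Matrix (Fin p) (Fin n) ℝ)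
    (hli : LinearIndependent ℝ (Sum.elim (fun i : Fin m => A i) (fun j : Fin p => B j))) :
    kappa B ℓ ≤ m ↔
      ∀ Λ : Finset (Fin p), ℓ ≤ Λ.card →
        ∀ u₁ u₂ : Fin n → ℝ, u₁ ∈ Wspace B Λ → u₂ ∈ Wspace B Λ →
          A.mulVec u₁ = A.mulVec u₂ → u₁ = u₂ :=
  stmt_3_general m n p ℓ A B hli
end

section
/- Let A ∈ ℝ^{m×n} and B ∈ ℝ^{p×n} be measurement and analysis operators such that the rows of the stacked matrix (A; B) ∈ ℝ^{(m+p)×n} are linearly independent, and let ℓ ∈ ℕ with ℓ ≤ p. Suppose that every ℓ-cosparse solution of its measurement equations is unique, i.e., whenever u₁, u₂ ∈ ℝ^n both have cosparsity at least ℓ with respect to B and Au₁ = Au₂, then u₁ = u₂. Then κ̃_B(ℓ) ≤ m, where κ̃_B(ℓ) := max{dim(W_{Λ₁} + W_{Λ₂}) : Λ₁, Λ₂ ⊆ [p], |Λ₁| ≥ ℓ, |Λ₂| ≥ ℓ}. -/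
/-- `κ̃_B(ℓ) = max{dim(W_{Λ₁} + W_{Λ₂}) : Λ₁, Λ₂ ⊆ [p], |Λ₁| ≥ ℓ, |Λ₂| ≥ ℓ}`. -/
noncomputable def kappaTilde {n p : ℕ} (B : Matrix (Fin p) (Fin n) ℝ) (ℓ : ℕ) : ℕ :=
  ((Finset.univ.filter (fun Λ : Finset (Fin p) => ℓ ≤ Λ.card)) ×ˢ
      (Finset.univ.filter (fun Λ : Finset (Fin p) => ℓ ≤ Λ.card))).sup
    (fun ΛΛ => Module.finrank ℝ ↥(Wspace B ΛΛ.1 ⊔ Wspace B ΛΛ.2))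

/- `f` is injective on `S ⊔ T`: a kernel vector `s + t` gives `f s = f (-t)`, hence `s = -t`. -/
theorem LinearMap.finrank_sup_le_of_map_eq_imp_eq {K V W : Type*} [DivisionRing K]
    [AddCommGroup V] [Module K V] [AddCommGroup W] [Module K W] [Module.Finite K W]
    (f : V →ₗ[K] W) {S T : Submodule K V}
    (h : ∀ x ∈ S, ∀ y ∈ T, f x = f y → x = y) :
    Module.finrank K ↥(S ⊔ T) ≤ Module.finrank K W := by
  refine LinearMap.finrank_le_finrank_of_injective (f := f ∘ₗ (S ⊔ T).subtype) ?_
  rw [← LinearMap.ker_eq_bot, LinearMap.ker_eq_bot']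
  rintro ⟨v, hv⟩ hfv
  obtain ⟨s, hs, t, ht, rfl⟩ := Submodule.mem_sup.mp hv
  have hst : f s = f (-t) := by
    simpa [map_add, map_neg, add_eq_zero_iff_eq_neg] using hfv
  simp [h s hs (-t) (neg_mem ht) hst]

theorem subset_filter_mulVec_eq_zero_of_mem_Wspace {n p : ℕ} {B : Matrix (Fin p) (Fin n) ℝ}
    {Λ : Finset (Fin p)} {w : Fin n → ℝ} (hw : w ∈ Wspace B Λ) :
    Λ ⊆ Finset.univ.filter (fun r => B.mulVec w r = 0) := by
  intro r hr
  rw [Wspace, Submodule.mem_iInf] at hw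
  simpa using (Submodule.mem_iInf _).mp (hw r) hr

theorem stmt_4_general (m n p ℓ : ℕ)
    (A : Matrix (Fin m) (Fin n) ℝ) (B : Matrix (Fin p) (Fin n) ℝ)
    (huniq : ∀ u₁ u₂ : Fin n → ℝ,
      ℓ ≤ (Finset.univ.filter (fun r => B.mulVec u₁ r = 0)).card →
      ℓ ≤ (Finset.univ.filter (fun r => B.mulVec u₂ r = 0)).card →
      A.mulVec u₁ = A.mulVec u₂ → u₁ = u₂) :
    kappaTilde B ℓ ≤ m := by
  refine Finset.sup_le fun ⟨Λ₁, Λ₂⟩ hΛ => ?_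
  simp only [Finset.mem_product, Finset.mem_filter, Finset.mem_univ, true_and] at hΛ
  have hcosparse {Λ : Finset (Fin p)} (hΛ : ℓ ≤ Λ.card) {w : Fin n → ℝ}
      (hw : w ∈ Wspace B Λ) : ℓ ≤ (Finset.univ.filter (fun r => B.mulVec w r = 0)).card :=
    hΛ.trans (Finset.card_le_card (subset_filter_mulVec_eq_zero_of_mem_Wspace hw))
  simpa using A.mulVecLin.finrank_sup_le_of_map_eq_imp_eq fun x hx y hy hxy =>
    huniq x y (hcosparse hΛ.1 hx) (hcosparse hΛ.2 hy) hxy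

/-- Necessary condition for uniqueness with unknown cosupport: if every `ℓ`-cosparse
solution of its measurement equations is unique, then `κ̃_B(ℓ) ≤ m`. -/
theorem stmt_4 (m n p ℓ : ℕ) (hℓ : ℓ ≤ p)
    (A : Matrix (Fin m) (Fin n) ℝ) (B : Matrix (Fin p) (Fin n) ℝ)
    (hli : LinearIndependent ℝ (Sum.elim (fun i : Fin m => A i) (fun j : Fin p => B j)))
    (huniq : ∀ u₁ u₂ : Fin n → ℝ,
      ℓ ≤ (Finset.univ.filter (fun r => B.mulVec u₁ r = 0)).card →
      ℓ ≤ (Finset.univ.filter (fun r => B.mulVec u₂ r = 0)).card →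
      A.mulVec u₁ = A.mulVec u₂ → u₁ = u₂) :
    kappaTilde B ℓ ≤ m :=
  stmt_4_general m n p ℓ A B huniq
end

section
/- Let q ≥ 3 and d ≥ 2 be integers and let S be a nonempty subset of the grid {0,…,q−1}^d with s = |S|. Then |Int_e(S)| ≤ max{ d·s·(1 − s^{−1/d}), d·q^d·(1 − 1/q)·(1 − (1 − s/q^d)^{1−1/d}) }, where the powers are real powers. -/
/-! Already the first term of the maximum bounds `|Int_e(S)|`. A line parallel to the `i`-th axis
meeting `S` in `k` points carries at most `k - 1` edges of `S`, so `S` has at most `|S| - |π_i S|`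
edges in direction `i`, where `π_i` is the projection along that axis. The projections satisfy
`∑ᵢ |π_i S| ≥ d |S|^(1 - 1/d)`, a consequence of the Loomis–Whitney inequality that also follows
directly by induction on the dimension: slicing `S` by its `i`-th coordinate into slices of size at
most `m = |π_i S|`, the induction hypothesis gives `∑_{j ≠ i} |π_j S| ≥ (d - 1) |S| m^(-1/(d-1))`,
and weighted AM–GM bounds this plus `m` from below by `d |S|^(1 - 1/d)`. -/

open scoped Classical in
/-- The edge interior of `S ⊆ {0,…,q−1}^d`: the set of grid edges (unordered pairs of
grid points at ℓ1-distance 1) with both endpoints in `S`. -/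
noncomputable def intE (q d : ℕ) (S : Finset (Fin d → Fin q)) :
    Finset (Sym2 (Fin d → Fin q)) :=
  Finset.univ.filter (fun e => ∃ a b : Fin d → Fin q, e = s(a, b) ∧ a ∈ S ∧ b ∈ S ∧
    (∑ i, |(a i : ℤ) - (b i : ℤ)|) = 1)

open Finset Function

lemma div_rpow_le_rpow_one_sub {x m r : ℝ} (hx : 0 < x) (hxm : x ≤ m) (hr : 0 ≤ r) :
    x / m ^ r ≤ x ^ (1 - r) := by
  rw [Real.rpow_sub hx, Real.rpow_one]
  exact div_le_div_of_nonneg_left hx.le (Real.rpow_pos_of_pos hx r)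
    (Real.rpow_le_rpow hx.le hxm hr)

lemma add_one_mul_rpow_le {n : ℕ} (hn : 0 < n) {s m : ℝ} (hs : 0 ≤ s) (hm : 0 < m) :
    (n + 1 : ℝ) * s ^ (1 - 1 / (n + 1 : ℝ)) ≤ n * (s / m ^ (1 / n : ℝ)) + m := by
  have hn' : (0 : ℝ) < n := by exact_mod_cast hn
  have hmr : 0 < m ^ (1 / n : ℝ) := Real.rpow_pos_of_pos hm _
  have hexp : (1 : ℝ) - 1 / (n + 1) = n / (n + 1) := by field_simp; ring
  have hm_exp : (m ^ (1 / n : ℝ)) ^ ((n : ℝ) / (n + 1)) = m ^ (1 / (n + 1 : ℝ)) := by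
    rw [← Real.rpow_mul hm.le]
    congr 1
    field_simp
  have hgm : (s / m ^ (1 / n : ℝ)) ^ ((n : ℝ) / (n + 1)) * m ^ (1 / (n + 1 : ℝ))
      = s ^ (1 - 1 / (n + 1 : ℝ)) := by
    rw [Real.div_rpow hs hmr.le, hm_exp, div_mul_cancel₀ _ (Real.rpow_pos_of_pos hm _).ne', hexp]
  have amgm := Real.geom_mean_le_arith_mean2_weighted (w₁ := n / (n + 1)) (w₂ := 1 / (n + 1))
    (p₁ := s / m ^ (1 / n : ℝ)) (p₂ := m) (by positivity) (by positivity)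
    (div_nonneg hs hmr.le) hm.le (by field_simp)
  rw [hgm] at amgm
  calc (n + 1 : ℝ) * s ^ (1 - 1 / (n + 1 : ℝ))
      ≤ (n + 1) * (n / (n + 1) * (s / m ^ (1 / n : ℝ)) + 1 / (n + 1) * m) := by gcongr
    _ = n * (s / m ^ (1 / n : ℝ)) + m := by field_simp

lemma card_div_rpow_le_sum_card_fiber_rpow {γ β : Type*} [DecidableEq β] (f : γ → β)
    (S : Finset γ) {m r : ℝ} (hr : 0 ≤ r) (hfiber : ∀ t, (#{a ∈ S | f a = t} : ℝ) ≤ m) :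
    #S / m ^ r ≤ ∑ t ∈ S.image f, (#{a ∈ S | f a = t} : ℝ) ^ (1 - r) := by
  rw [card_eq_sum_card_image f S, Nat.cast_sum, sum_div]
  refine sum_le_sum fun t ht => div_rpow_le_rpow_one_sub ?_ (hfiber t) hr
  exact_mod_cast card_pos.2 (fiber_nonempty_iff_mem_image.2 ht)

variable {ι α : Type*}

section Projection

variable [DecidableEq ι] [DecidableEq (ι → α)]

def projectAlong (c : ι → α) (i : ι) (S : Finset (ι → α)) : Finset (ι → α) :=
  S.image fun a => update a i (c i)

lemma card_le_card_projectAlong {c : ι → α} {i : ι} {S T : Finset (ι → α)} {t : α}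
    (hTS : T ⊆ S) (hT : ∀ a ∈ T, a i = t) : #T ≤ #(projectAlong c i S) := by
  refine card_le_card_of_injOn (fun a => update a i (c i))
    (fun a ha => mem_image_of_mem _ (hTS ha)) fun a ha b hb hab => funext fun j => ?_
  by_cases hj : j = i
  · subst hj
    rw [hT a ha, hT b hb]
  · simpa [hj] using congrFun hab j

lemma card_projectAlong_eq_sum_card_fiberwise [DecidableEq α] (c : ι → α) {i j : ι}
    (hji : j ≠ i) (S : Finset (ι → α)) :
    #(projectAlong c j S) = ∑ t ∈ S.image (· i), #(projectAlong c j {a ∈ S | a i = t}) := by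
  rw [card_eq_sum_card_fiberwise (f := (· i)) (t := S.image (· i))]
  · refine sum_congr rfl fun t _ => ?_
    simp only [projectAlong, filter_image, update_of_ne hji.symm]
  · intro b hb
    obtain ⟨a, ha, rfl⟩ := mem_image.1 hb
    simpa [update_of_ne hji.symm] using mem_image_of_mem (· i) ha

theorem card_mul_rpow_le_sum_card_projectAlong [DecidableEq α] (c : ι → α) (u : Finset ι)
    {S : Finset (ι → α)} (hS : S.Nonempty) (hSu : ∀ a ∈ S, ∀ b ∈ S, ∀ j ∉ u, a j = b j) :
    (#u : ℝ) * (#S : ℝ) ^ (1 - 1 / (#u : ℝ)) ≤ ∑ j ∈ u, (#(projectAlong c j S) : ℝ) := by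
  induction u using Finset.induction_on generalizing S with
  | empty => simp
  | @insert i u hi IH =>
    set m := #(projectAlong c i S)
    have hm : 0 < m := card_pos.2 (hS.image _)
    rw [card_insert_of_notMem hi, sum_insert hi]
    rcases u.eq_empty_or_nonempty with rfl | hu
    · simpa [projectAlong] using hS
    set n := #u
    have hslice_IH : ∀ t ∈ S.image (· i),
        (n : ℝ) * (#{a ∈ S | a i = t} : ℝ) ^ (1 - 1 / (n : ℝ)) ≤
          ∑ j ∈ u, (#(projectAlong c j {a ∈ S | a i = t}) : ℝ) := by
      intro t ht
      refine IH (fiber_nonempty_iff_mem_image.2 ht) fun a ha b hb j hj => ?_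
      rw [mem_filter] at ha hb
      by_cases hji : j = i
      · rw [hji, ha.2, hb.2]
      · exact hSu a ha.1 b hb.1 j (by simp [hji, hj])
    have hslice_le : ∀ t, (#{a ∈ S | a i = t} : ℝ) ≤ m := fun t => by
      exact_mod_cast card_le_card_projectAlong (filter_subset _ S) fun _ ha => (mem_filter.1 ha).2
    calc ((n + 1 : ℕ) : ℝ) * (#S : ℝ) ^ (1 - 1 / ((n + 1 : ℕ) : ℝ))
        ≤ n * (#S / (m : ℝ) ^ (1 / n : ℝ)) + m := by
          push_cast
          exact add_one_mul_rpow_le (card_pos.2 hu) (Nat.cast_nonneg _) (by exact_mod_cast hm)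
      _ ≤ n * ∑ t ∈ S.image (· i), (#{a ∈ S | a i = t} : ℝ) ^ (1 - 1 / (n : ℝ)) + m := by
          gcongr
          exact card_div_rpow_le_sum_card_fiber_rpow (fun a => a i) S (r := 1 / (n : ℝ))
            (by positivity) hslice_le
      _ ≤ ∑ t ∈ S.image (· i), ∑ j ∈ u, (#(projectAlong c j {a ∈ S | a i = t}) : ℝ) + m := by
          rw [mul_sum]
          exact add_le_add_left (sum_le_sum hslice_IH) _
      _ = m + ∑ j ∈ u, (#(projectAlong c j S) : ℝ) := by
          rw [sum_comm, add_comm]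
          congr 1
          refine sum_congr rfl fun j hj => ?_
          rw [card_projectAlong_eq_sum_card_fiberwise c (ne_of_mem_of_not_mem hj hi),
            Nat.cast_sum]

end Projection

section Edges

variable [LinearOrder α]

open scoped Classical in
noncomputable def edgesAlong (S : Finset (ι → α)) (i : ι) : Finset ((ι → α) × (ι → α)) :=
  {p ∈ S ×ˢ S | p.1 i ⋖ p.2 i ∧ ∀ j ≠ i, p.1 j = p.2 j}

lemma mem_edgesAlong {S : Finset (ι → α)} {i : ι} {a b : ι → α} :
    (a, b) ∈ edgesAlong S i ↔ a ∈ S ∧ b ∈ S ∧ a i ⋖ b i ∧ ∀ j ≠ i, a j = b j := by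
  simp [edgesAlong, and_assoc]

lemma card_edgesAlong_add_card_projectAlong_le [DecidableEq ι] [DecidableEq (ι → α)] (c : ι → α)
    (S : Finset (ι → α)) (i : ι) :
    #(edgesAlong S i) + #(projectAlong c i S) ≤ #S := by
  set lower := (edgesAlong S i).image Prod.fst
  have hlower : #lower = #(edgesAlong S i) := by
    refine card_image_of_injOn fun p hp p' hp' (h : p.1 = p'.1) => ?_
    obtain ⟨a, b⟩ := p
    obtain ⟨a', b'⟩ := p'
    rw [mem_coe, mem_edgesAlong] at hp hp'
    simp only at h
    subst h
    refine Prod.ext rfl (funext fun j => ?_)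
    by_cases hj : j = i
    · subst hj
      exact hp.2.2.1.unique_right hp'.2.2.1
    · exact (hp.2.2.2 j hj).symm.trans (hp'.2.2.2 j hj)
  have hlower_sub : lower ⊆ S := by
    intro a ha
    obtain ⟨⟨a, b⟩, hab, rfl⟩ := mem_image.1 ha
    exact (mem_edgesAlong.1 hab).1
  -- the topmost point of each line of `S` along `i` is not the lower end of an edge
  have hsurj : Set.SurjOn (fun a => update a i (c i))
      ((S \ lower : Finset (ι → α)) : Set (ι → α)) (projectAlong c i S : Set (ι → α)) := by
    intro p hp
    have hline : ({a ∈ S | update a i (c i) = p}).Nonempty := fiber_nonempty_iff_mem_image.2 hp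
    obtain ⟨a, ha, hmax⟩ := exists_max_image _ (· i) hline
    rw [mem_filter] at ha
    refine ⟨a, mem_sdiff.2 ⟨ha.1, fun hlow => ?_⟩, ha.2⟩
    obtain ⟨⟨a', b⟩, hab, rfl : a' = a⟩ := mem_image.1 hlow
    obtain ⟨-, hb, hcov, hagree⟩ := mem_edgesAlong.1 hab
    have hb_line : update b i (c i) = p := by
      rw [← ha.2]
      funext j
      by_cases hj : j = i
      · simp [hj]
      · simp [hj, hagree j hj]
    exact (hmax b (mem_filter.2 ⟨hb, hb_line⟩)).not_gt hcov.lt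
  have hproj := card_le_card_of_surjOn _ hsurj
  rw [card_sdiff_of_subset hlower_sub] at hproj
  have := card_le_card hlower_sub
  omega

end Edges

lemma exists_eq_one_and_eq_zero_of_sum_eq_one [Fintype ι] [DecidableEq ι] {f : ι → ℤ}
    (hf : ∀ i, 0 ≤ f i) (h : ∑ i, f i = 1) : ∃ i, f i = 1 ∧ ∀ j ≠ i, f j = 0 := by
  obtain ⟨i, -, hi⟩ := exists_ne_zero_of_sum_ne_zero (h ▸ one_ne_zero)
  have hsplit := add_sum_erase univ f (mem_univ i)
  have hrest : 0 ≤ ∑ j ∈ univ.erase i, f j := sum_nonneg fun j _ => hf j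
  have hfi : f i = 1 := by have := hf i; omega
  have hrest0 : ∑ j ∈ univ.erase i, f j = 0 := by omega
  exact ⟨i, hfi, fun j hj => (sum_eq_zero_iff_of_nonneg fun j _ => hf j).1 hrest0 j
    (mem_erase.2 ⟨hj, mem_univ j⟩)⟩

lemma covBy_or_covBy_of_abs_sub_eq_one {q : ℕ} {x y : Fin q} (h : |(x : ℤ) - y| = 1) :
    x ⋖ y ∨ y ⋖ x := by
  rw [Fin.covBy_iff, Fin.covBy_iff, Nat.covBy_iff_add_one_eq, Nat.covBy_iff_add_one_eq]
  rw [abs_eq zero_le_one] at h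
  omega

lemma intE_subset_biUnion_edgesAlong (q d : ℕ) (S : Finset (Fin d → Fin q)) :
    intE q d S ⊆ univ.biUnion fun i => (edgesAlong S i).image fun p => s(p.1, p.2) := by
  intro e he
  simp only [intE, mem_filter, mem_univ, true_and] at he
  obtain ⟨a, b, rfl, ha, hb, hdist⟩ := he
  obtain ⟨i, hi, hothers⟩ :=
    exists_eq_one_and_eq_zero_of_sum_eq_one (fun j => abs_nonneg _) hdist
  have hagree : ∀ j ≠ i, a j = b j := fun j hj =>
    Fin.ext (by simpa [sub_eq_zero] using hothers j hj)
  refine mem_biUnion.2 ⟨i, mem_univ _, ?_⟩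
  rcases covBy_or_covBy_of_abs_sub_eq_one hi with h | h
  · exact mem_image.2 ⟨(a, b), mem_edgesAlong.2 ⟨ha, hb, h, hagree⟩, rfl⟩
  · exact mem_image.2 ⟨(b, a), mem_edgesAlong.2 ⟨hb, ha, h, fun j hj => (hagree j hj).symm⟩,
      Sym2.eq_swap⟩

lemma card_intE_le_sum_card_edgesAlong (q d : ℕ) (S : Finset (Fin d → Fin q)) :
    #(intE q d S) ≤ ∑ i, #(edgesAlong S i) :=
  (card_le_card (intE_subset_biUnion_edgesAlong q d S)).trans
    (card_biUnion_le.trans (sum_le_sum fun _ _ => card_image_le))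

theorem stmt_6_general (q d : ℕ)
    (S : Finset (Fin d → Fin q)) (hS : S.Nonempty) :
    ((intE q d S).card : ℝ) ≤
      max ((d : ℝ) * (S.card : ℝ) * (1 - (S.card : ℝ) ^ (-(1 : ℝ) / (d : ℝ))))
        ((d : ℝ) * (q : ℝ) ^ (d : ℕ) * (1 - 1 / (q : ℝ)) *
          (1 - (1 - (S.card : ℝ) / (q : ℝ) ^ (d : ℕ)) ^ ((1 : ℝ) - 1 / (d : ℝ)))) := by
  refine le_max_of_le_left ?_
  obtain ⟨c, -⟩ := id hS
  have hs : (0 : ℝ) < #S := by exact_mod_cast card_pos.2 hS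
  have hprojections : (d : ℝ) * (#S : ℝ) ^ (1 - 1 / (d : ℝ)) ≤
      ∑ i, (#(projectAlong c i S) : ℝ) := by
    simpa using card_mul_rpow_le_sum_card_projectAlong c univ hS (by simp)
  have hedges : (#(intE q d S) : ℝ) ≤ ∑ i : Fin d, ((#S : ℝ) - #(projectAlong c i S)) :=
    calc (#(intE q d S) : ℝ) ≤ ∑ i, (#(edgesAlong S i) : ℝ) := by
          exact_mod_cast card_intE_le_sum_card_edgesAlong q d S
      _ ≤ ∑ i : Fin d, ((#S : ℝ) - #(projectAlong c i S)) := by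
          gcongr with i
          rw [le_sub_iff_add_le]
          exact_mod_cast card_edgesAlong_add_card_projectAlong_le c S i
  have hrpow : (#S : ℝ) * (#S : ℝ) ^ (-(1 : ℝ) / d) = (#S : ℝ) ^ (1 - 1 / (d : ℝ)) := by
    rw [show (1 : ℝ) - 1 / d = 1 + -(1 : ℝ) / d by ring, Real.rpow_add hs, Real.rpow_one]
  rw [sum_sub_distrib, sum_const, card_univ, Fintype.card_fin, nsmul_eq_mul] at hedges
  rw [mul_sub, mul_one, mul_assoc, hrpow]
  linarith

/-- Bollobás' edge-isoperimetric inequality on the grid `{0,…,q−1}^d`: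
`|Int_e(S)| ≤ max{ d·s·(1 − s^{−1/d}), d·q^d·(1 − 1/q)·(1 − (1 − s/q^d)^{1−1/d}) }`. -/
theorem stmt_6 (q d : ℕ) (hq : 3 ≤ q) (hd : 2 ≤ d)
    (S : Finset (Fin d → Fin q)) (hS : S.Nonempty) :
    ((intE q d S).card : ℝ) ≤
      max ((d : ℝ) * (S.card : ℝ) * (1 - (S.card : ℝ) ^ (-(1 : ℝ) / (d : ℝ))))
        ((d : ℝ) * (q : ℝ) ^ (d : ℕ) * (1 - 1 / (q : ℝ)) *
          (1 - (1 - (S.card : ℝ) / (q : ℝ) ^ (d : ℕ)) ^ ((1 : ℝ) - 1 / (d : ℝ)))) :=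
  stmt_6_general q d S hS
end

section
/- Let M ∈ ℝ^{r×N}, q ∈ ℝ^r, c ∈ ℝ^N, and let w̄ be a solution of the linear program minimize ⟨c, w⟩ subject to Mw = q and w ≥ 0 (componentwise). Set J = {i ∈ [N] : w̄_i = 0}. Then the following are equivalent: (i) w̄ is the unique solution of the linear program; (ii) there exists no w ∈ ℝ^N with Mw = 0, w_i ≥ 0 for all i ∈ J, ⟨c, w⟩ ≤ 0, and w ≠ 0. -/
/-!
If some nonzero `w` with `M w = 0`, `⟨c, w⟩ ≤ 0` and `w_i ≥ 0` on the zero set of `w̄` existed,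
then `w̄ + ε w` would, for small `ε > 0`, be a second feasible point that is no more costly
than `w̄`. Conversely, a second solution `w` yields such a direction `w - w̄`.
-/

open Filter Topology Matrix

lemma exists_pos_forall_nonneg_add_mul {ι : Type*} [Finite ι] {x d : ι → ℝ}
    (hx : ∀ i, 0 ≤ x i) (hd : ∀ i, x i = 0 → 0 ≤ d i) :
    ∃ ε > 0, ∀ i, 0 ≤ x i + ε * d i := by
  have hsmall : ∀ᶠ ε in 𝓝[>] (0 : ℝ), ∀ i, 0 ≤ x i + ε * d i := by
    refine eventually_all.2 fun i => ?_
    rcases (hx i).eq_or_lt with hxi | hxi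
    · filter_upwards [self_mem_nhdsWithin] with ε hε
      rw [← hxi, zero_add]
      exact mul_nonneg (le_of_lt hε) (hd i hxi.symm)
    · have hcont : ContinuousAt (fun ε : ℝ => x i + ε * d i) 0 := by fun_prop
      have hpos : ∀ᶠ ε in 𝓝 (0 : ℝ), 0 < x i + ε * d i :=
        hcont.eventually (lt_mem_nhds (by simpa using hxi))
      exact nhdsWithin_le_nhds (hpos.mono fun _ h => h.le)
  obtain ⟨ε, hε, hεpos⟩ := (hsmall.and self_mem_nhdsWithin).exists
  exact ⟨ε, hεpos, hε⟩

section LinearProgram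

variable {m n : Type*} [Fintype n] {M : Matrix m n ℝ} {q : m → ℝ} {c wbar : n → ℝ}

lemma eq_zero_of_mulVec_eq_zero_of_forall_eq (hfeas : M *ᵥ wbar = q) (hpos : ∀ i, 0 ≤ wbar i)
    (huniq : ∀ w, M *ᵥ w = q → (∀ i, 0 ≤ w i) → c ⬝ᵥ w ≤ c ⬝ᵥ wbar → w = wbar)
    {w : n → ℝ} (hw : M *ᵥ w = 0) (hwJ : ∀ i, wbar i = 0 → 0 ≤ w i) (hcw : c ⬝ᵥ w ≤ 0) :
    w = 0 := by
  obtain ⟨ε, hε, hnonneg⟩ := exists_pos_forall_nonneg_add_mul hpos hwJ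
  have hfeas' : M *ᵥ (wbar + ε • w) = q := by
    rw [Matrix.mulVec_add, Matrix.mulVec_smul, hw, smul_zero, add_zero, hfeas]
  have hcost : c ⬝ᵥ (wbar + ε • w) ≤ c ⬝ᵥ wbar := by
    rw [dotProduct_add, dotProduct_smul, smul_eq_mul]
    nlinarith
  have heq := huniq (wbar + ε • w) hfeas' hnonneg hcost
  rw [add_eq_left, smul_eq_zero] at heq
  exact heq.resolve_left hε.ne'

lemma forall_eq_of_not_exists_direction (hfeas : M *ᵥ wbar = q)
    (hno : ¬ ∃ w, M *ᵥ w = 0 ∧ (∀ i, wbar i = 0 → 0 ≤ w i) ∧ c ⬝ᵥ w ≤ 0 ∧ w ≠ 0)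
    {w : n → ℝ} (hw : M *ᵥ w = q) (hwpos : ∀ i, 0 ≤ w i) (hcw : c ⬝ᵥ w ≤ c ⬝ᵥ wbar) :
    w = wbar := by
  by_contra hne
  refine hno ⟨w - wbar, ?_, fun i hi => ?_, ?_, sub_ne_zero.2 hne⟩
  · rw [Matrix.mulVec_sub, hw, hfeas, sub_self]
  · simpa [hi] using hwpos i
  · rw [dotProduct_sub]
    linarith

end LinearProgram

theorem stmt_16_general (r N : ℕ) (M : Matrix (Fin r) (Fin N) ℝ) (q : Fin r → ℝ) (c : Fin N → ℝ)
    (wbar : Fin N → ℝ) (hfeas : M.mulVec wbar = q) (hpos : ∀ i, 0 ≤ wbar i) :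
    (∀ w : Fin N → ℝ, M.mulVec w = q → (∀ i, 0 ≤ w i) →
        dotProduct c w ≤ dotProduct c wbar → w = wbar) ↔
    ¬ ∃ w : Fin N → ℝ, M.mulVec w = 0 ∧ (∀ i, wbar i = 0 → 0 ≤ w i) ∧
        dotProduct c w ≤ 0 ∧ w ≠ 0 := by
  constructor
  · rintro huniq ⟨w, hw, hwJ, hcw, hne⟩
    exact hne (eq_zero_of_mulVec_eq_zero_of_forall_eq hfeas hpos huniq hw hwJ hcw)
  · exact fun hno w => forall_eq_of_not_exists_direction hfeas hno

/-- Mangasarian's uniqueness criterion for linear programs: a solution `w̄` of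
`min ⟨c, w⟩ s.t. Mw = q, w ≥ 0` is unique iff there is no `w ≠ 0` with `Mw = 0`,
`w_i ≥ 0` for all `i` with `w̄_i = 0`, and `⟨c, w⟩ ≤ 0`. -/
theorem stmt_16 (r N : ℕ) (M : Matrix (Fin r) (Fin N) ℝ) (q : Fin r → ℝ) (c : Fin N → ℝ)
    (wbar : Fin N → ℝ) (hfeas : M.mulVec wbar = q) (hpos : ∀ i, 0 ≤ wbar i)
    (hopt : ∀ w : Fin N → ℝ, M.mulVec w = q → (∀ i, 0 ≤ w i) →
      dotProduct c wbar ≤ dotProduct c w) :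
    (∀ w : Fin N → ℝ, M.mulVec w = q → (∀ i, 0 ≤ w i) →
        dotProduct c w ≤ dotProduct c wbar → w = wbar) ↔
    ¬ ∃ w : Fin N → ℝ, M.mulVec w = 0 ∧ (∀ i, wbar i = 0 → 0 ≤ w i) ∧
        dotProduct c w ≤ 0 ∧ w ≠ 0 :=
  stmt_16_general r N M q c wbar hfeas hpos
end

section
/- Let A ∈ ℝ^{m×n}, B ∈ ℝ^{p×n}, b ∈ ℝ^m, and let ū ∈ ℝ^n be a solution of the problem minimize ‖Bu‖₁ subject to Au = b, u ≥ 0, such that ū_i > 0 for every i ∈ [n]. Let Λ ⊆ [p] be the cosupport of ū with respect to B. Then ū is the unique solution of this problem if and only if for every u ∈ N(A) with u ≠ 0, Σ_{i∈Λ} |(Bu)_i| > Σ_{i∈Λᶜ} (Bu)_i · sign((Bū)_i). -/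
/-!
Let `v = B ū` and `D(w) = ∑_{i∈Λ} |wᵢ| + ∑_{i∉Λ} wᵢ sign vᵢ`, the one-sided derivative of `‖·‖₁`
at `v` in direction `w`. Since `|vᵢ + wᵢ| ≥ |vᵢ| + wᵢ sign vᵢ`, with equality when `|wᵢ| < |vᵢ|`,
we get `‖v + w‖₁ ≥ ‖v‖₁ + D(w)`, with equality for small `w`. The condition of the theorem reads
`D(-B d) > 0` for `0 ≠ d ∈ N(A)`; applied to `d = ū - u` it makes every feasible `u ≠ ū` strictly
worse. Conversely, as `ū > 0`, `ū - t d` is feasible for small `t > 0`, and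
`‖B(ū - t d)‖₁ - ‖v‖₁ = t D(-B d)`, which uniqueness forces to be positive.
-/

open Finset Matrix Filter Topology

noncomputable def l1DirDeriv {ι : Type*} [Fintype ι] (a w : ι → ℝ) : ℝ :=
  ∑ i ∈ univ.filter (fun r => a r = 0), |w i| +
    ∑ i ∈ univ.filter (fun r => a r ≠ 0), w i * Real.sign (a i)

lemma abs_add_mul_sign_le (a t : ℝ) : |a| + t * Real.sign a ≤ |a + t| := by
  rcases lt_trichotomy a 0 with h | rfl | h
  · rw [Real.sign_of_neg h, abs_of_neg h]
    linarith [neg_abs_le (a + t)]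
  · simp
  · rw [Real.sign_of_pos h, abs_of_pos h]
    linarith [le_abs_self (a + t)]

lemma abs_add_eq_add_mul_sign {a t : ℝ} (ht : |t| < |a|) :
    |a + t| = |a| + t * Real.sign a := by
  obtain ⟨ht₁, ht₂⟩ := abs_lt.mp ht
  rcases lt_trichotomy a 0 with h | rfl | h
  · rw [abs_of_neg h] at ht₁ ht₂
    rw [abs_of_neg (by linarith), abs_of_neg h, Real.sign_of_neg h]
    ring
  · rw [abs_zero] at ht
    exact absurd ht (abs_nonneg t).not_gt
  · rw [abs_of_pos h] at ht₁ ht₂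
    rw [abs_of_pos (by linarith), abs_of_pos h, Real.sign_of_pos h]
    ring

section l1DirDeriv

variable {ι : Type*} [Fintype ι]

lemma l1DirDeriv_smul (a w : ι → ℝ) {t : ℝ} (ht : 0 ≤ t) :
    l1DirDeriv a (t • w) = t * l1DirDeriv a w := by
  simp only [l1DirDeriv, Pi.smul_apply, smul_eq_mul, abs_mul, abs_of_nonneg ht, mul_add,
    mul_sum, mul_assoc]

lemma zero_lt_l1DirDeriv_neg_iff (a w : ι → ℝ) :
    0 < l1DirDeriv a (-w) ↔
      ∑ i ∈ univ.filter (fun r => a r ≠ 0), w i * Real.sign (a i) <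
        ∑ i ∈ univ.filter (fun r => a r = 0), |w i| := by
  simp only [l1DirDeriv, Pi.neg_apply, abs_neg, neg_mul, sum_neg_distrib, ← sub_eq_add_neg,
    sub_pos]

lemma sum_abs_add_sub_l1DirDeriv (a w : ι → ℝ) :
    ∑ i, |(a + w) i| - (∑ i, |a i| + l1DirDeriv a w) =
      ∑ i ∈ univ.filter (fun r => a r ≠ 0), (|a i + w i| - (|a i| + w i * Real.sign (a i))) := by
  have hΛ : ∀ f : ι → ℝ, ∑ i, f i =
      ∑ i ∈ univ.filter (fun r => a r = 0), f i + ∑ i ∈ univ.filter (fun r => a r ≠ 0), f i :=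
    fun f => (sum_filter_add_sum_filter_not univ _ f).symm
  have hzero : ∀ f : ℝ → ℝ, ∑ i ∈ univ.filter (fun r => a r = 0), f ((a + w) i) =
      ∑ i ∈ univ.filter (fun r => a r = 0), f (w i) :=
    fun f => sum_congr rfl fun i hi => by rw [Pi.add_apply, (mem_filter.mp hi).2, zero_add]
  have hΛ_abs : ∑ i ∈ univ.filter (fun r => a r = 0), |a i| = 0 :=
    sum_eq_zero fun i hi => by rw [(mem_filter.mp hi).2, abs_zero]
  rw [hΛ fun i => |(a + w) i|, hΛ fun i => |a i|, hzero, hΛ_abs, l1DirDeriv, sum_sub_distrib,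
    sum_add_distrib]
  simp only [Pi.add_apply]
  ring

lemma sum_abs_add_le (a w : ι → ℝ) : ∑ i, |a i| + l1DirDeriv a w ≤ ∑ i, |(a + w) i| := by
  rw [← sub_nonneg, sum_abs_add_sub_l1DirDeriv]
  exact sum_nonneg fun i _ => sub_nonneg.mpr (abs_add_mul_sign_le _ _)

lemma sum_abs_add_eq {a w : ι → ℝ} (hw : ∀ i, a i ≠ 0 → |w i| < |a i|) :
    ∑ i, |(a + w) i| = ∑ i, |a i| + l1DirDeriv a w := by
  rw [← sub_eq_zero, sum_abs_add_sub_l1DirDeriv]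
  exact sum_eq_zero fun i hi =>
    sub_eq_zero.mpr (abs_add_eq_add_mul_sign (hw i (mem_filter.mp hi).2))

end l1DirDeriv

lemma eventually_forall_abs_mul_lt {ι : Type*} [Finite ι] (x y : ι → ℝ) :
    ∀ᶠ t in 𝓝 (0 : ℝ), ∀ i, 0 < y i → |t * x i| < y i := by
  refine eventually_all.2 fun i => ?_
  by_cases hy : 0 < y i
  · have hlim : Tendsto (fun t : ℝ => |t * x i|) (𝓝 0) (𝓝 0) := by
      simpa using ((continuous_id.mul continuous_const).abs.tendsto (0 : ℝ))
    exact (hlim.eventually (gt_mem_nhds hy)).mono fun _ ht _ => ht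
  · exact Eventually.of_forall fun _ h => absurd h hy

section LinearProgram

variable {κ ι ρ : Type*} [Fintype ι] [Fintype ρ]
  (A : Matrix κ ι ℝ) (B : Matrix ρ ι ℝ) (b : κ → ℝ) (ubar : ι → ℝ)

lemma l1DirDeriv_pos_of_unique (hA : A *ᵥ ubar = b) (hpos : ∀ i, 0 < ubar i)
    (huniq : ∀ u : ι → ℝ, A *ᵥ u = b → (∀ i, 0 ≤ u i) →
      ∑ i, |(B *ᵥ u) i| ≤ ∑ i, |(B *ᵥ ubar) i| → u = ubar)
    {d : ι → ℝ} (hd : A *ᵥ d = 0) (hd₀ : d ≠ 0) :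
    0 < l1DirDeriv (B *ᵥ ubar) (-(B *ᵥ d)) := by
  set v := B *ᵥ ubar
  obtain ⟨t, ⟨hfeas, hsmall⟩, ht⟩ := ((((eventually_forall_abs_mul_lt d ubar).and
    (eventually_forall_abs_mul_lt (B *ᵥ d) fun i => |v i|)).filter_mono nhdsWithin_le_nhds).and
      (self_mem_nhdsWithin : Set.Ioi (0 : ℝ) ∈ 𝓝[>] 0)).exists
  set u := ubar - t • d
  have hBu : B *ᵥ u = v + t • -(B *ᵥ d) := by
    rw [mulVec_sub, mulVec_smul, smul_neg, sub_eq_add_neg]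
  have hu_ne : u ≠ ubar := by
    rw [Ne, sub_eq_self, smul_eq_zero, not_or]
    exact ⟨ht.ne', hd₀⟩
  have hlt : ∑ i, |v i| < ∑ i, |(B *ᵥ u) i| := by
    refine lt_of_not_ge fun hle => hu_ne (huniq u ?_ (fun i => ?_) hle)
    · rw [mulVec_sub, mulVec_smul, hd, smul_zero, sub_zero, hA]
    · have := (abs_lt.mp (hfeas i (hpos i))).2
      simp only [u, Pi.sub_apply, Pi.smul_apply, smul_eq_mul]
      linarith
  have hsmall' : ∀ i, v i ≠ 0 → |(t • -(B *ᵥ d)) i| < |v i| := fun i hi => by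
    simpa [abs_mul] using hsmall i (abs_pos.mpr hi)
  rw [hBu, sum_abs_add_eq hsmall', l1DirDeriv_smul _ _ ht.le] at hlt
  exact pos_of_mul_pos_right (by linarith) ht.le

lemma eq_of_l1DirDeriv_pos (hA : A *ᵥ ubar = b)
    (hnull : ∀ d : ι → ℝ, A *ᵥ d = 0 → d ≠ 0 → 0 < l1DirDeriv (B *ᵥ ubar) (-(B *ᵥ d)))
    {u : ι → ℝ} (hu : A *ᵥ u = b) (hle : ∑ i, |(B *ᵥ u) i| ≤ ∑ i, |(B *ᵥ ubar) i|) :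
    u = ubar := by
  by_contra hne
  have hd : A *ᵥ (ubar - u) = 0 := by rw [mulVec_sub, hA, hu, sub_self]
  have hBu : B *ᵥ u = B *ᵥ ubar + -(B *ᵥ (ubar - u)) := by
    rw [mulVec_sub]
    abel
  have hgt := sum_abs_add_le (B *ᵥ ubar) (-(B *ᵥ (ubar - u)))
  rw [← hBu] at hgt
  linarith [hnull _ hd (sub_ne_zero.mpr (Ne.symm hne))]

end LinearProgram

theorem stmt_18_general (m n p : ℕ) (A : Matrix (Fin m) (Fin n) ℝ) (B : Matrix (Fin p) (Fin n) ℝ)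
    (b : Fin m → ℝ) (ubar : Fin n → ℝ)
    (hA : A.mulVec ubar = b) (hpos : ∀ i, 0 < ubar i) :
    (∀ u : Fin n → ℝ, A.mulVec u = b → (∀ i, 0 ≤ u i) →
        (∑ i, |B.mulVec u i|) ≤ (∑ i, |B.mulVec ubar i|) → u = ubar) ↔
    (∀ u : Fin n → ℝ, A.mulVec u = 0 → u ≠ 0 →
        (∑ i ∈ Finset.univ.filter (fun r => B.mulVec ubar r = 0), |B.mulVec u i|) >
        ∑ i ∈ Finset.univ.filter (fun r => B.mulVec ubar r ≠ 0),
          B.mulVec u i * Real.sign (B.mulVec ubar i)) := by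
  simp only [gt_iff_lt, ← zero_lt_l1DirDeriv_neg_iff]
  exact ⟨fun huniq _ hd hd₀ => l1DirDeriv_pos_of_unique A B b ubar hA hpos huniq hd hd₀,
    fun hnull _ hu _ hle => eq_of_l1DirDeriv_pos A B b ubar hA hnull hu hle⟩

/-- Nullspace uniqueness condition: a strictly positive solution `ū` of
`min ‖Bu‖₁ s.t. Au = b, u ≥ 0` with cosupport `Λ` is the unique solution iff for every
nonzero `u ∈ N(A)` one has `∑_{i∈Λ} |(Bu)ᵢ| > ∑_{i∈Λᶜ} (Bu)ᵢ · sign((Bū)ᵢ)`. -/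
theorem stmt_18 (m n p : ℕ) (A : Matrix (Fin m) (Fin n) ℝ) (B : Matrix (Fin p) (Fin n) ℝ)
    (b : Fin m → ℝ) (ubar : Fin n → ℝ)
    (hA : A.mulVec ubar = b) (hpos : ∀ i, 0 < ubar i)
    (hopt : ∀ u : Fin n → ℝ, A.mulVec u = b → (∀ i, 0 ≤ u i) →
      (∑ i, |B.mulVec ubar i|) ≤ ∑ i, |B.mulVec u i|) :
    (∀ u : Fin n → ℝ, A.mulVec u = b → (∀ i, 0 ≤ u i) →
        (∑ i, |B.mulVec u i|) ≤ (∑ i, |B.mulVec ubar i|) → u = ubar) ↔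
    (∀ u : Fin n → ℝ, A.mulVec u = 0 → u ≠ 0 →
        (∑ i ∈ Finset.univ.filter (fun r => B.mulVec ubar r = 0), |B.mulVec u i|) >
        ∑ i ∈ Finset.univ.filter (fun r => B.mulVec ubar r ≠ 0),
          B.mulVec u i * Real.sign (B.mulVec ubar i)) :=
  stmt_18_general m n p A B b ubar hA hpos
end
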